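/- Let A and B be commutative rings equipped with ℕ-gradings 𝒜 and ℬ (each a GradedRing structure), let f : A → B be a ring homomorphism mapping 𝒜 i into ℬ i for every i ∈ ℕ, let C be a torsion-free abelian group, and let g : B → C be an additive homomorphism such that every element b of the degree-2 component ℬ 2 with g(b) = 0 is the image under f of some element of the degree-2 component 𝒜 2. Let n ≥ 2 be a natural number and assume the degree-2n component 𝒜 (2n) is the zero subgroup. Then every torsion element b of ℬ 2 satisfies b^n = 0 in B. -/

import Mathlib

theorem AddMonoidHom.map_eq_zero_of_zsmul_eq_zero {B C : Type*} [AddGroup B] [AddGroup C]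
    (hC : ∀ m : ℤ, m ≠ 0 → ∀ c : C, m • c = 0 → c = 0) (g : B →+ C)
    {b : B} {m : ℤ} (hm : m ≠ 0) (hmb : m • b = 0) : g b = 0 :=
  hC m hm (g b) (by rw [← map_zsmul, hmb, map_zero])

theorem SetLike.pow_eq_zero_of_mem_graded_of_eq_bot {ι A : Type*} [AddMonoid ι] [Ring A]
    {𝒜 : ι → AddSubgroup A} [SetLike.GradedMonoid 𝒜] {i : ι} {a : A} (ha : a ∈ 𝒜 i)
    {n : ℕ} (hvanish : 𝒜 (n • i) = ⊥) : a ^ n = 0 := by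
  simpa [hvanish] using SetLike.pow_mem_graded n ha

theorem torsion_degree_two_pow_eq_zero_general
    {A B C : Type*} [CommRing A] [CommRing B] [AddCommGroup C]
    (𝒜 : ℕ → AddSubgroup A) (ℬ : ℕ → AddSubgroup B)
    [GradedRing 𝒜]
    (f : A →+* B)
    (hCtf : ∀ (m : ℤ), m ≠ 0 → ∀ c : C, m • c = 0 → c = 0)
    (g : B →+ C)
    (hlift : ∀ b ∈ ℬ 2, g b = 0 → ∃ a ∈ 𝒜 2, f a = b)
    (n : ℕ) (hvanish : 𝒜 (2 * n) = ⊥) :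
    ∀ b ∈ ℬ 2, (∃ m : ℤ, m ≠ 0 ∧ m • b = 0) → b ^ n = 0 := by
  rintro b hb ⟨m, hm, hmb⟩
  obtain ⟨a, ha, rfl⟩ := hlift b hb (g.map_eq_zero_of_zsmul_eq_zero hCtf hm hmb)
  have han : a ^ n = 0 :=
    SetLike.pow_eq_zero_of_mem_graded_of_eq_bot ha (by rwa [smul_eq_mul, mul_comm])
  rw [← map_pow, han, map_zero]

/-- Algebraic content of Lemma 2.3 (case `dim M = 5`): given a graded ring
homomorphism `f : A →+* B`, a torsion-free abelian group `C`, and an additive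
map `g : B →+ C` such that every degree-2 element of `B` killed by `g` lifts to
a degree-2 element of `A`, if `n ≥ 2` and the degree-`2n` component of `A`
vanishes, then every torsion element `b` of the degree-2 component of `B`
satisfies `b^n = 0`. -/
theorem torsion_degree_two_pow_eq_zero
    {A B C : Type*} [CommRing A] [CommRing B] [AddCommGroup C]
    (𝒜 : ℕ → AddSubgroup A) (ℬ : ℕ → AddSubgroup B)
    [GradedRing 𝒜] [GradedRing ℬ]
    (f : A →+* B) (hf : ∀ i : ℕ, ∀ a ∈ 𝒜 i, f a ∈ ℬ i)
    (hCtf : ∀ (m : ℤ), m ≠ 0 → ∀ c : C, m • c = 0 → c = 0)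
    (g : B →+ C)
    (hlift : ∀ b ∈ ℬ 2, g b = 0 → ∃ a ∈ 𝒜 2, f a = b)
    (n : ℕ) (hn : 2 ≤ n) (hvanish : 𝒜 (2 * n) = ⊥) :
    ∀ b ∈ ℬ 2, (∃ m : ℤ, m ≠ 0 ∧ m • b = 0) → b ^ n = 0 :=
  torsion_degree_two_pow_eq_zero_general 𝒜 ℬ f hCtf g hlift n hvanish
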